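/- (Iwasawa decomposition) Every g ∈ G = SL(n, K) can be written g = p·a·v with p ∈ P = SL(n, O'), a ∈ A a diagonal matrix with entries of the form t^{i}u^{j} and determinant 1, and v ∈ U upper triangular unipotent; moreover the diagonal matrix a is uniquely determined by g, so G is the disjoint union of the sets PaU over a ∈ A. -/

import Mathlib

/-!
The ring `O'` is a valuation ring of `K`: for `x ≠ 0`, `x ∈ O'` exactly when `ν'(x) ≥ 0` in
`ℤ ×ₗ ℤ`. Its valuation is split by the monomials `t^i u^j`: every `x ≠ 0` is a unit of `O'` times
exactly one monomial, namely the one with exponent `ν'(x)`.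

Over any valuation ring `O` of a field `F`, left multiplication by `SL(n, O)` makes a matrix upper
triangular: clear the columns one at a time, using as pivot an entry of maximal valuation, so that
all multipliers lie in `O`. For `g ∈ SL(n, F)` this gives `g = q⁻¹ b`; writing the diagonal of `b`
as units times monomials and moving the units into `q⁻¹` yields `g = p a v`. If `p a v = p' a' v'`,
then `p'⁻¹ p = (a' v') (a v)⁻¹` is upper triangular and lies in `SL(n, O)`, so its diagonal entries
are units and `a`, `a'` have the same valuations, hence the same monomials.
-/

set_option synthInstance.maxHeartbeats 1000000
set_option maxHeartbeats 1000000

noncomputable section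

open HahnSeries

namespace TwoDimLocal

variable (k : Type) [Field k]

/-- `k((u))`, the field of Laurent series over `k`. -/
abbrev K1 := LaurentSeries k

/-- `K = k((u))((t))`, the two-dimensional local field of iterated Laurent series. -/
abbrev K := LaurentSeries (LaurentSeries k)

section Nonneg

variable (F : Type) [Field F]

lemma order_nonneg_of_support {x : LaurentSeries F} (hx : x ≠ 0)
    (h : ∀ n : ℤ, n < 0 → x.coeff n = 0) : 0 ≤ x.order := by
  by_contra hlt
  push_neg at hlt
  exact (HahnSeries.leadingCoeff_ne_zero.mpr hx) (by rw [HahnSeries.leadingCoeff_eq]; exact h x.order hlt)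

/-- The subring `F[[X]] ⊆ F((X))` of power series, described by vanishing of the
coefficients of negative index. -/
def nonneg : Subring (LaurentSeries F) where
  carrier := {x | ∀ n : ℤ, n < 0 → x.coeff n = 0}
  zero_mem' := by intro n _; simp
  one_mem' := by
    intro n hn
    rw [HahnSeries.coeff_one, if_neg (by omega)]
  add_mem' := by
    intro a b ha hb n hn
    rw [HahnSeries.coeff_add, ha n hn, hb n hn, add_zero]
  neg_mem' := by
    intro a ha n hn
    rw [HahnSeries.coeff_neg, ha n hn, neg_zero]
  mul_mem' := by
    intro a b ha hb n hn
    by_contra hne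
    obtain ⟨i, hi, j, hj, rfl⟩ := support_mul_subset ((mem_support _ _).2 hne)
    rw [mem_support] at hi hj
    have hi0 : 0 ≤ i := by by_contra h; push_neg at h; exact hi (ha i h)
    have hj0 : 0 ≤ j := by by_contra h; push_neg at h; exact hj (hb j h)
    exact absurd hn (not_lt.2 (add_nonneg hi0 hj0))

lemma mem_nonneg_iff {x : LaurentSeries F} :
    x ∈ nonneg F ↔ ∀ n : ℤ, n < 0 → x.coeff n = 0 := Iff.rfl

lemma coeff_zero_mul {x y : LaurentSeries F} (hx : x ∈ nonneg F) (hy : y ∈ nonneg F) :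
    (x * y).coeff 0 = x.coeff 0 * y.coeff 0 := by
  rcases eq_or_ne x 0 with rfl | hx0
  · simp
  rcases eq_or_ne y 0 with rfl | hy0
  · simp
  have hxo : 0 ≤ x.order := order_nonneg_of_support F hx0 hx
  have hyo : 0 ≤ y.order := order_nonneg_of_support F hy0 hy
  rcases lt_or_eq_of_le hxo with hxo' | hxo'
  · have h1 : x.coeff 0 = 0 := HahnSeries.coeff_eq_zero_of_lt_order hxo'
    have h2 : (x * y).coeff 0 = 0 := by
      apply HahnSeries.coeff_eq_zero_of_lt_order
      rw [HahnSeries.order_mul hx0 hy0]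
      omega
    rw [h1, h2, zero_mul]
  rcases lt_or_eq_of_le hyo with hyo' | hyo'
  · have h1 : y.coeff 0 = 0 := HahnSeries.coeff_eq_zero_of_lt_order hyo'
    have h2 : (x * y).coeff 0 = 0 := by
      apply HahnSeries.coeff_eq_zero_of_lt_order
      rw [HahnSeries.order_mul hx0 hy0]
      omega
    rw [h1, h2, mul_zero]
  have := HahnSeries.coeff_mul_order_add_order x y
  rw [HahnSeries.leadingCoeff_eq, HahnSeries.leadingCoeff_eq, ← hxo', ← hyo'] at this
  simpa using this

end Nonneg

/-- The ring of integers `O_K = k((u))[[t]]` of `K` with respect to the `t`-adic valuation. -/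
def OK : Subring (K k) := nonneg (K1 k)

/-- The rank-2 valuation subring `O' = p⁻¹(k[[u]]) ⊆ K`, consisting of those `t`-adic
integers whose constant `t`-coefficient is a power series in `u`. -/
def Oprime : Subring (K k) where
  carrier := {x | x ∈ OK k ∧ x.coeff 0 ∈ nonneg k}
  zero_mem' := ⟨Subring.zero_mem _, by simp⟩
  one_mem' := ⟨Subring.one_mem _, by
    intro n hn
    rw [show ((1 : K k).coeff 0) = 1 from by rw [HahnSeries.coeff_one]; simp]
    rw [HahnSeries.coeff_one, if_neg (by omega)]⟩
  add_mem' := by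
    rintro a b ⟨ha1, ha2⟩ ⟨hb1, hb2⟩
    refine ⟨Subring.add_mem _ ha1 hb1, ?_⟩
    rw [HahnSeries.coeff_add]
    exact Subring.add_mem _ ha2 hb2
  neg_mem' := by
    rintro a ⟨ha1, ha2⟩
    refine ⟨Subring.neg_mem _ ha1, ?_⟩
    rw [HahnSeries.coeff_neg]
    exact Subring.neg_mem _ ha2
  mul_mem' := by
    rintro a b ⟨ha1, ha2⟩ ⟨hb1, hb2⟩
    refine ⟨Subring.mul_mem _ ha1 hb1, ?_⟩
    rw [coeff_zero_mul (K1 k) ha1 hb1]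
    exact Subring.mul_mem _ ha2 hb2

lemma Oprime_le_OK : (Oprime k : Set (K k)) ⊆ (OK k : Set (K k)) := fun _ h => h.1

/-- The local parameter `t` of `K = k((u))((t))`. -/
def t : K k := HahnSeries.single (1 : ℤ) 1

/-- The local parameter `u` of `K = k((u))((t))`, i.e. the image in `K` of the
local parameter of `k((u))`. -/
def u : K k := HahnSeries.C (HahnSeries.single (1 : ℤ) (1 : k))

/-- The maximal ideal `m = p⁻¹(u·k[[u]])` of `O'`, as a subset of `K`. -/
def mSet : Set (K k) := {x | x ∈ Oprime k ∧ (x.coeff 0).coeff 0 = 0}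

/-- The rank-two valuation `ν' : K* → ℤ ×ₗ ℤ`: the first component is the `t`-adic order,
the second one the `u`-adic order of the leading `t`-coefficient. (Junk value at `0`.) -/
def nu (x : K k) : ℤ ×ₗ ℤ := toLex (x.order, (x.coeff x.order).order)

end TwoDimLocal

namespace TwoDimLocal

open Matrix

variable (k : Type) [Field k] {n : ℕ}

/-- The subgroup `P = SL(n, O')`: matrices with all entries in `O'`. -/
def IsP (g : SpecialLinearGroup (Fin n) (K k)) : Prop :=
  ∀ i j : Fin n, g.val i j ∈ Oprime k

/-- Upper triangular unipotent matrices. -/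
def IsU (v : Matrix (Fin n) (Fin n) (K k)) : Prop :=
  (∀ i : Fin n, v i i = 1) ∧ ∀ i j : Fin n, j < i → v i j = 0

/-- The diagonal matrix `diag(t^{i₁}u^{j₁}, …, t^{iₙ}u^{jₙ})` attached to a vector
of exponent pairs `e`. -/
def D (e : Fin n → ℤ × ℤ) : Matrix (Fin n) (Fin n) (K k) :=
  Matrix.diagonal fun i => t k ^ (e i).1 * u k ^ (e i).2

end TwoDimLocal

theorem ne_zero_of_prod_eq_one {ι M₀ : Type*} [Fintype ι] [CommMonoidWithZero M₀] [Nontrivial M₀]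
    {d : ι → M₀} (hd : ∏ i, d i = 1) (i : ι) : d i ≠ 0 :=
  (isUnit_of_dvd_one (hd ▸ Finset.dvd_prod_of_mem d (Finset.mem_univ i))).ne_zero

theorem MonoidHom.apply_ne_zero {G M₀ : Type*} [Group G] [MonoidWithZero M₀] [Nontrivial M₀]
    (f : G →* M₀) (a : G) : f a ≠ 0 := by
  simpa using (f.toHomUnits a).ne_zero

namespace ValuationSubring

variable {F : Type*} [Field F] (O : ValuationSubring F)

theorem div_mem_of_valuation_le {x y : F} (h : O.valuation x ≤ O.valuation y) : x / y ∈ O := by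
  rw [← O.valuation_le_one_iff, map_div₀]
  exact div_le_one_of_le₀ h zero_le

theorem eq_zero_of_valuation_le_zero {x : F} (h : O.valuation x ≤ 0) : x = 0 :=
  (map_eq_zero O.valuation).1 (le_zero_iff.1 h)

end ValuationSubring

namespace Matrix

section Field

variable {n F : Type*} [Fintype n] [DecidableEq n] [Field F]

def integralSL (O : Subring F) : Subgroup (SpecialLinearGroup n F) :=
  (SpecialLinearGroup.map O.subtype).range

theorem mem_integralSL_iff {O : Subring F} {q : SpecialLinearGroup n F} :
    q ∈ integralSL O ↔ ∀ i j, (q : Matrix n n F) i j ∈ O := by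
  constructor
  · rintro ⟨q', rfl⟩ i j
    exact ((q' : Matrix n n O) i j).2
  · intro hq
    refine ⟨⟨Matrix.of fun i j => ⟨_, hq i j⟩, Subtype.val_injective ?_⟩, ?_⟩
    · exact (RingHom.map_det O.subtype _).trans q.2
    · ext i j
      rfl

def addRowMul (a : n) (w : n → F) : Matrix n n F := 1 + vecMulVec w (Pi.single a 1)

theorem addRowMul_mul_apply (a : n) (w : n → F) (M : Matrix n n F) (i j : n) :
    (addRowMul a w * M) i j = M i j + w i * M a j := by
  simp [addRowMul, add_mul, vecMulVec_mul, vecMulVec_apply]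

theorem det_addRowMul {a : n} {w : n → F} (hw : w a = 0) : (addRowMul a w).det = 1 := by
  rw [addRowMul, vecMulVec_eq Unit, det_one_add_replicateCol_mul_replicateRow]
  simp [hw]

theorem exists_mem_integralSL_coe_eq_addRowMul {O : Subring F} {a : n} {w : n → F}
    (hwa : w a = 0) (hw : ∀ i, w i ∈ O) :
    ∃ q : SpecialLinearGroup n F, q ∈ integralSL O ∧ (q : Matrix n n F) = addRowMul a w := by
  refine ⟨⟨addRowMul a w, det_addRowMul hwa⟩, mem_integralSL_iff.2 fun i j => ?_, rfl⟩
  simp only [addRowMul, add_apply, one_apply, vecMulVec_apply, Pi.single_apply]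
  split_ifs <;> simp [hw i, O.zero_mem, O.add_mem O.one_mem (hw i)]

end Field

section RowReduction

variable {F : Type*} [Field F] {m : ℕ}

def IsUpperTriangularUpTo (M : Matrix (Fin m) (Fin m) F) (k : ℕ) : Prop :=
  ∀ ⦃i j : Fin m⦄, (j : ℕ) < k → j < i → M i j = 0

theorem IsUpperTriangularUpTo.addRowMul_mul {M : Matrix (Fin m) (Fin m) F} {k : ℕ}
    (hM : M.IsUpperTriangularUpTo k) {a : Fin m} (ha : k ≤ a) (w : Fin m → F) :
    (addRowMul a w * M).IsUpperTriangularUpTo k := by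
  intro i j hjk hji
  rw [addRowMul_mul_apply, hM hjk hji, hM hjk (by omega), mul_zero, add_zero]

theorem IsUpperTriangularUpTo.isUpperTriangular {M : Matrix (Fin m) (Fin m) F}
    (hM : M.IsUpperTriangularUpTo m) : M.IsUpperTriangular :=
  fun _ j hji => hM j.2 hji

variable (O : ValuationSubring F) {M : Matrix (Fin m) (Fin m) F} {k : Fin m}

theorem exists_integralSL_mul_pivot (hM : M.IsUpperTriangularUpTo k) :
    ∃ q : SpecialLinearGroup (Fin m) F, q ∈ integralSL O.toSubring ∧
      ((q : Matrix (Fin m) (Fin m) F) * M).IsUpperTriangularUpTo k ∧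
      ∀ i, k ≤ i → O.valuation (((q : Matrix (Fin m) (Fin m) F) * M) i k) ≤
        O.valuation (((q : Matrix (Fin m) (Fin m) F) * M) k k) := by
  obtain ⟨i₀, hi₀k, hmax⟩ := (Finset.Ici k).exists_max_image (fun i => O.valuation (M i k))
    ⟨k, Finset.mem_Ici.2 le_rfl⟩
  simp only [Finset.mem_Ici] at hi₀k hmax
  by_cases h₀ : M i₀ k = 0
  · refine ⟨1, Subgroup.one_mem _, by simpa using hM, fun i hi => ?_⟩
    have := hmax i hi
    rw [h₀, map_zero] at this
    simpa using this.trans zero_le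
  -- adding a multiple of the pivot row `i₀` to row `k` moves the pivot value to the diagonal
  set c := 1 - M k k / M i₀ k
  have hc : c ∈ O := O.sub_mem O.one_mem (O.div_mem_of_valuation_le (hmax k le_rfl))
  obtain ⟨q, hq, hqM⟩ := exists_mem_integralSL_coe_eq_addRowMul (O := O.toSubring) (a := i₀)
    (w := Pi.single k c)
    (by
      rcases eq_or_ne i₀ k with rfl | h
      · simp [c, h₀]
      · simp [h])
    (fun i => by by_cases h : i = k <;> simp [h, hc])
  have hkk : (addRowMul i₀ (Pi.single k c) * M) k k = M i₀ k := by
    rw [addRowMul_mul_apply, Pi.single_eq_same, sub_mul, div_mul_cancel₀ _ h₀]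
    ring
  refine ⟨q, hq, hqM ▸ hM.addRowMul_mul hi₀k _, fun i hi => ?_⟩
  rcases eq_or_ne i k with rfl | hik
  · exact le_rfl
  · rw [hqM, hkk, addRowMul_mul_apply]
    simpa [hik] using hmax i hi

theorem exists_integralSL_mul_isUpperTriangularUpTo_succ (hM : M.IsUpperTriangularUpTo k)
    (hpiv : ∀ i, k ≤ i → O.valuation (M i k) ≤ O.valuation (M k k)) :
    ∃ q : SpecialLinearGroup (Fin m) F, q ∈ integralSL O.toSubring ∧
      ((q : Matrix (Fin m) (Fin m) F) * M).IsUpperTriangularUpTo (k + 1) := by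
  set w : Fin m → F := fun i => if k < i then -(M i k / M k k) else 0
  obtain ⟨q, hq, hqM⟩ := exists_mem_integralSL_coe_eq_addRowMul (O := O.toSubring) (a := k)
    (w := w) (by simp [w]) fun i => by
      by_cases h : k < i
      · simpa [w, h] using neg_mem (O.div_mem_of_valuation_le (hpiv i h.le))
      · simp [w, h]
  refine ⟨q, hq, fun i j hj hji => ?_⟩
  rcases Nat.lt_succ_iff_lt_or_eq.1 hj with hj | hj
  · exact hqM ▸ hM.addRowMul_mul le_rfl w hj hji
  obtain rfl : j = k := Fin.ext hj
  rw [hqM, addRowMul_mul_apply]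
  by_cases hjj : M j j = 0
  · have hij : M i j = 0 := O.eq_zero_of_valuation_le_zero (by simpa [hjj] using hpiv i hji.le)
    simp [w, hij, hjj]
  · simp [w, hji, div_mul_cancel₀ _ hjj]

theorem exists_integralSL_mul_isUpperTriangularUpTo (g : Matrix (Fin m) (Fin m) F) :
    ∀ k ≤ m, ∃ q : SpecialLinearGroup (Fin m) F, q ∈ integralSL O.toSubring ∧
      ((q : Matrix (Fin m) (Fin m) F) * g).IsUpperTriangularUpTo k := by
  intro k
  induction k with
  | zero => exact fun _ => ⟨1, Subgroup.one_mem _, fun _ _ h => absurd h (Nat.not_lt_zero _)⟩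
  | succ k ih =>
    intro hk
    obtain ⟨q₁, hq₁, h₁⟩ := ih (by omega)
    obtain ⟨q₂, hq₂, h₂, hpiv⟩ := exists_integralSL_mul_pivot O (k := ⟨k, hk⟩) h₁
    obtain ⟨q₃, hq₃, h₃⟩ := exists_integralSL_mul_isUpperTriangularUpTo_succ O h₂ hpiv
    refine ⟨q₃ * q₂ * q₁, mul_mem (mul_mem hq₃ hq₂) hq₁, ?_⟩
    rwa [SpecialLinearGroup.coe_mul, SpecialLinearGroup.coe_mul, Matrix.mul_assoc,
      Matrix.mul_assoc]

theorem exists_integralSL_mul_isUpperTriangular (g : Matrix (Fin m) (Fin m) F) :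
    ∃ q : SpecialLinearGroup (Fin m) F, q ∈ integralSL O.toSubring ∧
      ((q : Matrix (Fin m) (Fin m) F) * g).IsUpperTriangular :=
  (exists_integralSL_mul_isUpperTriangularUpTo O g m le_rfl).imp
    fun _ h => ⟨h.1, h.2.isUpperTriangular⟩

end RowReduction

section Triangular

variable {n F : Type*} [Fintype n] [LinearOrder n] [Field F]

theorem IsUpperTriangular.mul_apply_self {A B : Matrix n n F} (hA : A.IsUpperTriangular)
    (hB : B.IsUpperTriangular) (i : n) : (A * B) i i = A i i * B i i := by
  rw [mul_apply, Finset.sum_eq_single i (fun l _ hl => ?_) (by simp)]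
  rcases hl.lt_or_gt with h | h
  · rw [hA h, zero_mul]
  · rw [hB h, mul_zero]

variable [DecidableEq n]

theorem IsUpperTriangular.exists_eq_diagonal_mul {b : Matrix n n F} (hb : b.IsUpperTriangular)
    (hb₀ : ∀ i, b i i ≠ 0) :
    ∃ v : Matrix n n F, (∀ i, v i i = 1) ∧ v.IsUpperTriangular ∧
      b = diagonal (fun i => b i i) * v := by
  refine ⟨diagonal (fun i => (b i i)⁻¹) * b, fun i => by simp [hb₀ i],
    (blockTriangular_diagonal _).mul hb, ?_⟩
  rw [← Matrix.mul_assoc, diagonal_mul_diagonal]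
  simp [hb₀]

theorem valuation_diag_eq_of_mul_eq (O : ValuationSubring F) {p p' : SpecialLinearGroup n F}
    (hp : p ∈ integralSL O.toSubring) (hp' : p' ∈ integralSL O.toSubring)
    {b b' : Matrix n n F} (hb : b.IsUpperTriangular) (hb' : b'.IsUpperTriangular)
    (hdet : IsUnit b.det) (h : (p : Matrix n n F) * b = p' * b') (i : n) :
    O.valuation (b i i) = O.valuation (b' i i) := by
  set X := p'⁻¹ * p
  have hX : X ∈ integralSL O.toSubring := mul_mem (inv_mem hp') hp
  have hXb : (X : Matrix n n F) * b = b' := by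
    rw [SpecialLinearGroup.coe_mul, Matrix.mul_assoc, h, ← Matrix.mul_assoc,
      ← SpecialLinearGroup.coe_mul, inv_mul_cancel, SpecialLinearGroup.coe_one, Matrix.one_mul]
  have := b.invertibleOfIsUnitDet hdet
  -- `X = b' b⁻¹` is upper triangular and lies in `SL(n, O)`, so its diagonal consists of units
  have hXtri : (X : Matrix n n F).IsUpperTriangular := by
    rw [← Matrix.mul_inv_cancel_right_of_invertible (A := b) (X : Matrix n n F), hXb]
    exact hb'.mul (blockTriangular_inv_of_blockTriangular hb)
  have hXdiag : ∀ j, O.valuation ((X : Matrix n n F) j j) = 1 := by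
    have hprod : ∏ j, O.valuation ((X : Matrix n n F) j j) = 1 := by
      rw [← map_prod, ← det_of_isUpperTriangular hXtri, X.2, map_one]
    exact fun j => (Finset.prod_eq_one_iff_of_le_one'
      (fun j _ => (O.valuation_le_one_iff _).2 (mem_integralSL_iff.1 hX j j))).1 hprod j
      (Finset.mem_univ j)
  rw [← hXb, hXtri.mul_apply_self hb, map_mul, hXdiag, one_mul]

end Triangular

section Iwasawa

variable {F Λ : Type*} [Field F] [AddCommGroup Λ] (O : ValuationSubring F)
  (μ : Multiplicative Λ →* F) {m : ℕ}

theorem exists_valuation_eq_one_mul_section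
    (hμ : ∀ x : F, x ≠ 0 → ∃! a : Λ, O.valuation (μ (.ofAdd a)) = O.valuation x)
    {ι : Type*} [Fintype ι] {d : ι → F} (hd : ∏ i, d i = 1) :
    ∃ w : ι → F, ∃ e : ι → Λ, (∀ i, O.valuation (w i) = 1) ∧ ∏ i, w i = 1 ∧
      ∀ i, d i = w i * μ (.ofAdd (e i)) := by
  have hd₀ := ne_zero_of_prod_eq_one hd
  choose e he using fun i => (hμ (d i) (hd₀ i)).exists
  -- the exponents sum to zero because `v (μ (∑ e)) = ∏ v (d i) = v 1`
  have hsum : ∑ i, e i = 0 := by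
    refine (hμ 1 one_ne_zero).unique ?_ ?_
    · simp only [ofAdd_sum, map_prod, he]
      rw [← map_prod, hd]
    · rw [ofAdd_zero, map_one, map_one]
  refine ⟨fun i => d i / μ (.ofAdd (e i)), e, fun i => ?_, ?_, fun i => ?_⟩
  · rw [map_div₀, he i, div_self ((map_ne_zero _).2 (hd₀ i))]
  · rw [Finset.prod_div_distrib, hd, ← map_prod, ← ofAdd_sum, hsum, ofAdd_zero, map_one, div_one]
  · rw [div_mul_cancel₀ _ (μ.apply_ne_zero _)]

theorem exists_iwasawa
    (hμ : ∀ x : F, x ≠ 0 → ∃! a : Λ, O.valuation (μ (.ofAdd a)) = O.valuation x)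
    (g : SpecialLinearGroup (Fin m) F) :
    ∃ e : Fin m → Λ, ∃ p : SpecialLinearGroup (Fin m) F, ∃ v : Matrix (Fin m) (Fin m) F,
      p ∈ integralSL O.toSubring ∧ (∀ i, v i i = 1) ∧ v.IsUpperTriangular ∧
      (g : Matrix (Fin m) (Fin m) F) = p * diagonal (fun i => μ (.ofAdd (e i))) * v := by
  obtain ⟨q, hq, hb⟩ := exists_integralSL_mul_isUpperTriangular O (g : Matrix (Fin m) (Fin m) F)
  set b := (q : Matrix (Fin m) (Fin m) F) * g
  have hdet : ∏ i, b i i = 1 := by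
    rw [← det_of_isUpperTriangular hb, det_mul, q.2, g.2, one_mul]
  obtain ⟨v, hv₁, hv, hbv⟩ := hb.exists_eq_diagonal_mul (ne_zero_of_prod_eq_one hdet)
  obtain ⟨w, e, hw, hwprod, hwe⟩ := exists_valuation_eq_one_mul_section O μ hμ hdet
  let δ : SpecialLinearGroup (Fin m) F := ⟨diagonal w, by rw [det_diagonal, hwprod]⟩
  have hδ : δ ∈ integralSL O.toSubring := mem_integralSL_iff.2 fun i j => by
    by_cases h : i = j
    · subst h
      simpa [δ] using (O.valuation_le_one_iff _).1 (hw i).le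
    · simp [δ, h]
  refine ⟨e, q⁻¹ * δ, v, mul_mem (inv_mem hq) hδ, hv₁, hv, ?_⟩
  rw [SpecialLinearGroup.coe_mul, Matrix.mul_assoc, Matrix.mul_assoc, ← Matrix.mul_assoc _ _ v,
    diagonal_mul_diagonal, ← funext hwe, ← hbv, ← Matrix.mul_assoc, ← SpecialLinearGroup.coe_mul,
    inv_mul_cancel, SpecialLinearGroup.coe_one, Matrix.one_mul]

theorem iwasawa_exponents_unique
    (hμ : ∀ x : F, x ≠ 0 → ∃! a : Λ, O.valuation (μ (.ofAdd a)) = O.valuation x)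
    {p p' : SpecialLinearGroup (Fin m) F} (hp : p ∈ integralSL O.toSubring)
    (hp' : p' ∈ integralSL O.toSubring) {v v' : Matrix (Fin m) (Fin m) F}
    (hv₁ : ∀ i, v i i = 1) (hv : v.IsUpperTriangular)
    (hv₁' : ∀ i, v' i i = 1) (hv' : v'.IsUpperTriangular) {e e' : Fin m → Λ}
    (h : (p : Matrix (Fin m) (Fin m) F) * diagonal (fun i => μ (.ofAdd (e i))) * v =
      p' * diagonal (fun i => μ (.ofAdd (e' i))) * v') :
    e = e' := by
  have hdet : IsUnit (diagonal (fun i => μ (.ofAdd (e i))) * v).det := by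
    rw [det_mul, det_of_isUpperTriangular hv, det_diagonal]
    simpa [hv₁] using Finset.prod_ne_zero_iff.2 fun i _ => μ.apply_ne_zero (.ofAdd (e i))
  funext i
  have hval := valuation_diag_eq_of_mul_eq O hp hp' ((blockTriangular_diagonal _).mul hv)
    ((blockTriangular_diagonal _).mul hv') hdet (by simpa only [Matrix.mul_assoc] using h) i
  simp only [diagonal_mul, hv₁, hv₁', mul_one] at hval
  exact (hμ _ (μ.apply_ne_zero _)).unique hval rfl

theorem existsUnique_iwasawa
    (hμ : ∀ x : F, x ≠ 0 → ∃! a : Λ, O.valuation (μ (.ofAdd a)) = O.valuation x)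
    (g : SpecialLinearGroup (Fin m) F) :
    ∃! e : Fin m → Λ, ∃ p : SpecialLinearGroup (Fin m) F, ∃ v : Matrix (Fin m) (Fin m) F,
      (∀ i j, (p : Matrix (Fin m) (Fin m) F) i j ∈ O) ∧
      ((∀ i, v i i = 1) ∧ v.IsUpperTriangular) ∧
      (g : Matrix (Fin m) (Fin m) F) = p * diagonal (fun i => μ (.ofAdd (e i))) * v := by
  obtain ⟨e, p, v, hp, hv₁, hv, hg⟩ := exists_iwasawa O μ hμ g
  refine ⟨e, ⟨p, v, mem_integralSL_iff.1 hp, ⟨hv₁, hv⟩, hg⟩, ?_⟩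
  rintro e' ⟨p', v', hp', ⟨hv₁', hv'⟩, hg'⟩
  exact iwasawa_exponents_unique O μ hμ (mem_integralSL_iff.2 hp') hp hv₁' hv' hv₁ hv
    (hg'.symm.trans hg)

end Iwasawa

end Matrix

namespace TwoDimLocal

theorem mem_nonneg_iff_order_nonneg {F : Type} [Field F] {x : LaurentSeries F} (hx : x ≠ 0) :
    x ∈ nonneg F ↔ 0 ≤ x.order :=
  ⟨order_nonneg_of_support F hx, fun h _ hn => coeff_eq_zero_of_lt_order (hn.trans_le h)⟩

variable (k : Type) [Field k]

theorem nu_mul {x y : K k} (hx : x ≠ 0) (hy : y ≠ 0) : nu k (x * y) = nu k x + nu k y := by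
  rw [nu, nu, nu, order_mul hx hy, coeff_mul_order_add_order,
    order_mul (leadingCoeff_ne_zero.2 hx) (leadingCoeff_ne_zero.2 hy), leadingCoeff_eq,
    leadingCoeff_eq]
  rfl

theorem nu_one : nu k 1 = 0 := by
  simp [nu]

theorem nu_inv {x : K k} (hx : x ≠ 0) : nu k x⁻¹ = -nu k x := by
  refine (neg_eq_of_add_eq_zero_right ?_).symm
  rw [← nu_mul k hx (inv_ne_zero hx), mul_inv_cancel₀ hx, nu_one]

theorem mem_Oprime_iff_nu_nonneg {x : K k} (hx : x ≠ 0) : x ∈ Oprime k ↔ 0 ≤ nu k x := by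
  change x ∈ nonneg (K1 k) ∧ x.coeff 0 ∈ nonneg k ↔ _
  rw [mem_nonneg_iff_order_nonneg hx, nu, Prod.Lex.le_iff]
  rcases lt_trichotomy 0 x.order with h | h | h
  · simp [h, h.le, coeff_eq_zero_of_lt_order h, (nonneg k).zero_mem]
  · have hc : x.coeff 0 ≠ 0 := by
      rw [h, ← leadingCoeff_eq]
      exact leadingCoeff_ne_zero.2 hx
    simp [← h, mem_nonneg_iff_order_nonneg hc]
  · simp [h.not_ge, h.not_gt, h.ne']

def valuationSubring : ValuationSubring (K k) where
  toSubring := Oprime k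
  mem_or_inv_mem' x := by
    rcases eq_or_ne x 0 with rfl | hx
    · exact Or.inl (Oprime k).zero_mem
    change x ∈ Oprime k ∨ x⁻¹ ∈ Oprime k
    rw [mem_Oprime_iff_nu_nonneg k hx, mem_Oprime_iff_nu_nonneg k (inv_ne_zero hx), nu_inv k hx,
      neg_nonneg]
    exact le_total _ _

theorem valuation_le_valuation_iff {x y : K k} (hx : x ≠ 0) (hy : y ≠ 0) :
    (valuationSubring k).valuation x ≤ (valuationSubring k).valuation y ↔ nu k y ≤ nu k x := by
  rw [← div_le_one₀ ((Valuation.pos_iff _).2 hy), ← map_div₀,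
    ValuationSubring.valuation_le_one_iff]
  change x / y ∈ Oprime k ↔ _
  rw [mem_Oprime_iff_nu_nonneg k (div_ne_zero hx hy), div_eq_mul_inv,
    nu_mul k hx (inv_ne_zero hy), nu_inv k hy, ← sub_eq_add_neg, sub_nonneg]

theorem valuation_eq_valuation_iff {x y : K k} (hx : x ≠ 0) (hy : y ≠ 0) :
    (valuationSubring k).valuation x = (valuationSubring k).valuation y ↔ nu k x = nu k y := by
  rw [le_antisymm_iff, le_antisymm_iff, valuation_le_valuation_iff k hx hy,
    valuation_le_valuation_iff k hy hx, and_comm]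

theorem t_ne_zero : t k ≠ 0 := single_ne_zero one_ne_zero

theorem u_ne_zero : u k ≠ 0 := by
  rw [u, C_apply]
  exact single_ne_zero (single_ne_zero one_ne_zero)

def monomial : Multiplicative (ℤ × ℤ) →* K k where
  toFun a := t k ^ a.toAdd.1 * u k ^ a.toAdd.2
  map_one' := by simp
  map_mul' a b := by
    simp only [toAdd_mul, Prod.fst_add, Prod.snd_add, zpow_add₀ (t_ne_zero k),
      zpow_add₀ (u_ne_zero k)]
    ring

theorem monomial_ofAdd (a : ℤ × ℤ) :
    monomial k (.ofAdd a) = single a.1 (single a.2 (1 : k)) := by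
  change t k ^ a.1 * u k ^ a.2 = _
  rw [t, u, ← RatFunc.single_zpow, ← map_zpow₀, ← RatFunc.single_zpow, C_apply,
    single_mul_single, add_zero, one_mul]

theorem nu_monomial (a : ℤ × ℤ) : nu k (monomial k (.ofAdd a)) = toLex a := by
  rw [monomial_ofAdd, nu, order_single (single_ne_zero one_ne_zero), coeff_single_same,
    order_single one_ne_zero]

theorem existsUnique_valuation_monomial_eq {x : K k} (hx : x ≠ 0) :
    ∃! a : ℤ × ℤ, (valuationSubring k).valuation (monomial k (.ofAdd a)) =
      (valuationSubring k).valuation x := by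
  simp only [valuation_eq_valuation_iff k ((monomial k).apply_ne_zero _) hx, nu_monomial]
  exact ⟨ofLex (nu k x), toLex_ofLex _, fun a ha => by rw [← ha, ofLex_toLex]⟩

open Matrix

variable {n : ℕ}

theorem iwasawa_decomposition (g : SpecialLinearGroup (Fin n) (K k)) :
    ∃! e : Fin n → ℤ × ℤ,
      ∃ p : SpecialLinearGroup (Fin n) (K k), ∃ v : Matrix (Fin n) (Fin n) (K k),
        IsP k p ∧ IsU k v ∧ g.val = p.val * D k e * v :=
  existsUnique_iwasawa (valuationSubring k) (monomial k)
    (fun _ => existsUnique_valuation_monomial_eq k) g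

end TwoDimLocal
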